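/- arXiv:1111.2420 — 5 statements merged into one kernel-verified Lean document; each statement's English description precedes it below -/
import Mathlib

section
/- Let (a_n) be a bounded sequence of nonnegative real numbers. Then liminf_{N→∞} (1/N) ∑_{n=1}^N a_n = 0 if and only if there exists a set S ⊆ ℕ of upper density 1 such that a_n → 0 along n ∈ S (i.e., for every ε > 0, a_n < ε for all sufficiently large n ∈ S). -/
open Filter
open scoped Classical

noncomputable def upperDensity (S : Set ℕ) : ℝ :=
  Filter.limsup (fun N : ℕ => (((Finset.Icc 1 N).filter (fun n => n ∈ S)).card : ℝ) / N)
    Filter.atTop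

/-!
Suppose the Cesàro means of `a` have lower limit `0`. Pick times `φ 0 < φ 1 < ⋯` at which the
mean is below `1 / (k + 1)²`, and put `n` in `S` when `a n < 1 / (k + 1)` for some `k` with
`n ≤ φ k`. By Markov's inequality at time `φ k`, fewer than `φ k / (k + 1)` of the indices
`n ≤ φ k` have `a n ≥ 1 / (k + 1)`, so `S` has density close to `1` at the times `φ k`; and an
`n ∈ S` beyond `φ k` only qualifies through a threshold smaller than `1 / (k + 1)`.

Conversely, if `a ≤ C` and `a n < ε` for the large `n ∈ S`, then the mean up to `N` is at most
`ε`, plus `C` times the proportion of `[1, N]` outside `S`, plus `O(1 / N)`; since `S` has upper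
density `1`, this is frequently close to `ε`.
-/

open Finset

section LiminfLimsup

variable {α : Type*} {l : Filter α} [l.NeBot] {f : α → ℝ} {c : ℝ}

theorem liminf_eq_iff_frequently_lt (hc : ∀ᶠ x in l, c ≤ f x) (hb : IsBoundedUnder (· ≤ ·) l f) :
    liminf f l = c ↔ ∀ y > c, ∃ᶠ x in l, f x < y := by
  rw [le_antisymm_iff, and_iff_left (le_liminf_of_le hb.isCoboundedUnder_ge hc)]
  exact liminf_le_iff hb.isCoboundedUnder_ge (isBoundedUnder_of_eventually_ge hc)

theorem limsup_eq_iff_frequently_gt (hc : ∀ᶠ x in l, f x ≤ c) (hb : IsBoundedUnder (· ≥ ·) l f) :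
    limsup f l = c ↔ ∀ y < c, ∃ᶠ x in l, y < f x := by
  rw [le_antisymm_iff, and_iff_right (limsup_le_of_le hb.isCoboundedUnder_le hc)]
  exact le_limsup_iff hb.isCoboundedUnder_le (isBoundedUnder_of_eventually_le hc)

end LiminfLimsup

theorem card_filter_le_mul_le_sum {ι : Type*} (s : Finset ι) {a : ι → ℝ}
    (ha : ∀ i ∈ s, 0 ≤ a i) (t : ℝ) : #{i ∈ s | t ≤ a i} * t ≤ ∑ i ∈ s, a i :=
  calc (#{i ∈ s | t ≤ a i} : ℝ) * t = ∑ _i ∈ s with t ≤ a _i, t := by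
        rw [sum_const, nsmul_eq_mul]
    _ ≤ ∑ i ∈ s with t ≤ a i, a i := sum_le_sum fun i hi => (mem_filter.1 hi).2
    _ ≤ ∑ i ∈ s, a i :=
        sum_le_sum_of_subset_of_nonneg (filter_subset _ _) fun i hi _ => ha i hi

section Density

variable {S : Set ℕ} {N : ℕ}

noncomputable def partialDensity (S : Set ℕ) (N : ℕ) : ℝ := #{n ∈ Icc 1 N | n ∈ S} / N

theorem partialDensity_nonneg : 0 ≤ partialDensity S N := by
  unfold partialDensity; positivity

theorem partialDensity_le_one : partialDensity S N ≤ 1 :=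
  div_le_one_of_le₀ (by simpa using card_filter_le (Icc 1 N) (· ∈ S)) N.cast_nonneg

theorem one_sub_partialDensity (hN : N ≠ 0) :
    1 - partialDensity S N = #{n ∈ Icc 1 N | n ∉ S} / N := by
  have hcard : (#{n ∈ Icc 1 N | n ∈ S} : ℝ) + #{n ∈ Icc 1 N | n ∉ S} = N := by
    exact_mod_cast (card_filter_add_card_filter_not (s := Icc 1 N) (· ∈ S)).trans (by simp)
  have hN' : (N : ℝ) ≠ 0 := Nat.cast_ne_zero.2 hN
  rw [partialDensity, eq_div_iff hN', sub_mul, div_mul_cancel₀ _ hN']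
  linarith

theorem upperDensity_eq_one_iff :
    upperDensity S = 1 ↔ ∀ y < 1, ∃ᶠ N in atTop, y < partialDensity S N :=
  limsup_eq_iff_frequently_gt (.of_forall fun _ => partialDensity_le_one)
    (isBoundedUnder_of ⟨0, fun _ => partialDensity_nonneg⟩)

end Density

section CesaroMean

variable {a : ℕ → ℝ} {C : ℝ}

noncomputable def cesaroMean (a : ℕ → ℝ) (N : ℕ) : ℝ := (∑ n ∈ Icc 1 N, a n) / N

theorem cesaroMean_nonneg (ha : ∀ n, 0 ≤ a n) (N : ℕ) : 0 ≤ cesaroMean a N :=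
  div_nonneg (sum_nonneg fun n _ => ha n) N.cast_nonneg

theorem cesaroMean_le (hC : ∀ n, a n ≤ C) (hC0 : 0 ≤ C) (N : ℕ) : cesaroMean a N ≤ C :=
  div_le_of_le_mul₀ N.cast_nonneg hC0 <| by
    simpa [mul_comm] using sum_le_card_nsmul (Icc 1 N) a C fun n _ => hC n

theorem liminf_cesaroMean_eq_zero_iff (ha : ∀ n, 0 ≤ a n) (hC : ∀ n, a n ≤ C) :
    liminf (cesaroMean a) atTop = 0 ↔ ∀ y > 0, ∃ᶠ N in atTop, cesaroMean a N < y :=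
  liminf_eq_iff_frequently_lt (.of_forall (cesaroMean_nonneg ha))
    (isBoundedUnder_of ⟨C, cesaroMean_le hC ((ha 0).trans (hC 0))⟩)

end CesaroMean

section Converse

variable {a : ℕ → ℝ} {C ε : ℝ} {S : Set ℕ} {N₀ N : ℕ}

theorem cesaroMean_le_of_lt_on (hC : ∀ n, a n ≤ C) (hC0 : 0 ≤ C) (hε : 0 ≤ ε)
    (hS : ∀ n ∈ S, N₀ ≤ n → a n < ε) (hN : N ≠ 0) :
    cesaroMean a N ≤ ε + C * (1 - partialDensity S N) + C * (N₀ / N) := by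
  have hpoint : ∀ n, a n ≤ ε + C * (if n ∉ S then 1 else 0) + C * (if n < N₀ then 1 else 0) := by
    intro n
    by_cases hnS : n ∈ S <;> by_cases hnN₀ : n < N₀
    all_goals simp only [hnS, hnN₀, not_true, not_false_eq_true, if_true, if_false]
    · linarith [hC n]
    · linarith [hS n hnS (not_lt.1 hnN₀)]
    · linarith [hC n]
    · linarith [hC n]
  have hearly : (#{n ∈ Icc 1 N | n < N₀} : ℝ) ≤ N₀ := by
    exact_mod_cast (card_le_card fun n hn => mem_range.2 (mem_filter.1 hn).2).trans
      (card_range N₀).le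
  have hsum : ∑ n ∈ Icc 1 N, a n ≤ ε * N + C * #{n ∈ Icc 1 N | n ∉ S} + C * N₀ :=
    calc ∑ n ∈ Icc 1 N, a n
        ≤ ∑ n ∈ Icc 1 N, (ε + C * (if n ∉ S then 1 else 0) + C * (if n < N₀ then 1 else 0)) :=
          sum_le_sum fun n _ => hpoint n
      _ = ε * N + C * #{n ∈ Icc 1 N | n ∉ S} + C * #{n ∈ Icc 1 N | n < N₀} := by
          simp only [sum_add_distrib, ← mul_sum, sum_boole, sum_const, Nat.card_Icc, nsmul_eq_mul]
          simp [mul_comm]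
      _ ≤ ε * N + C * #{n ∈ Icc 1 N | n ∉ S} + C * N₀ := by gcongr
  have hN' : (0 : ℝ) < N := Nat.cast_pos.2 (Nat.pos_of_ne_zero hN)
  rw [one_sub_partialDensity hN, cesaroMean, div_le_iff₀ hN']
  calc ∑ n ∈ Icc 1 N, a n ≤ ε * N + C * #{n ∈ Icc 1 N | n ∉ S} + C * N₀ := hsum
    _ = _ := by field_simp

theorem liminf_cesaroMean_eq_zero_of_upperDensity_eq_one (ha : ∀ n, 0 ≤ a n)
    (hC : ∀ n, a n ≤ C) (hS : upperDensity S = 1)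
    (hlim : ∀ ε > 0, ∃ N : ℕ, ∀ n ∈ S, N ≤ n → a n < ε) :
    liminf (cesaroMean a) atTop = 0 := by
  have hC0 : 0 ≤ C := (ha 0).trans (hC 0)
  refine (liminf_cesaroMean_eq_zero_iff ha hC).2 fun y hy => ?_
  set ε := y / (2 * C + 2)
  have hε : 0 < ε := by positivity
  obtain ⟨N₀, hN₀⟩ := hlim ε hε
  have hdense := upperDensity_eq_one_iff.1 hS (1 - ε) (by linarith)
  have hlate : ∀ᶠ N : ℕ in atTop, (N₀ : ℝ) / N < ε :=
    (tendsto_const_div_atTop_nhds_zero_nat _).eventually (gt_mem_nhds hε)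
  refine (hdense.and_eventually (hlate.and (eventually_ne_atTop 0))).mono ?_
  rintro N ⟨hd, hN₀N, hN⟩
  have hεy : ε * (2 * C + 2) = y := div_mul_cancel₀ _ (by positivity)
  calc cesaroMean a N ≤ ε + C * (1 - partialDensity S N) + C * (N₀ / N) :=
        cesaroMean_le_of_lt_on hC hC0 hε.le hN₀ hN
    _ ≤ ε + C * ε + C * ε := by gcongr; linarith
    _ < y := by nlinarith

end Converse

section Forward

variable {a : ℕ → ℝ} {φ : ℕ → ℕ}

def thresholdSet (a : ℕ → ℝ) (φ : ℕ → ℕ) : Set ℕ :=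
  {n | ∃ k, n ≤ φ k ∧ a n < 1 / ((k : ℝ) + 1)}

theorem StrictMono.exists_lt_of_mem_thresholdSet (hφ : StrictMono φ) {ε : ℝ} (hε : 0 < ε) :
    ∃ N : ℕ, ∀ n ∈ thresholdSet a φ, N ≤ n → a n < ε := by
  obtain ⟨K, hK⟩ := exists_nat_one_div_lt hε
  refine ⟨φ K + 1, fun n ⟨k, hnk, hak⟩ hn => ?_⟩
  have hKk : K ≤ k := hφ.le_iff_le.1 (by omega)
  calc a n < 1 / ((k : ℝ) + 1) := hak
    _ ≤ 1 / ((K : ℝ) + 1) := by gcongr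
    _ < ε := hK

theorem one_sub_lt_partialDensity_thresholdSet (ha : ∀ n, 0 ≤ a n) {K : ℕ} (hK : φ K ≠ 0)
    (hmean : cesaroMean a (φ K) < (1 / ((K : ℝ) + 1)) ^ 2) :
    1 - 1 / ((K : ℝ) + 1) < partialDensity (thresholdSet a φ) (φ K) := by
  set N := φ K
  set t : ℝ := 1 / ((K : ℝ) + 1)
  have ht0 : 0 < t := by positivity
  have hN : (0 : ℝ) < N := Nat.cast_pos.2 (Nat.pos_of_ne_zero hK)
  have hmissed : {n ∈ Icc 1 N | n ∉ thresholdSet a φ} ⊆ {n ∈ Icc 1 N | t ≤ a n} := by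
    intro n
    simp only [mem_filter, and_imp]
    exact fun hn hnS => ⟨hn, not_lt.1 fun h => hnS ⟨K, (mem_Icc.1 hn).2, h⟩⟩
  have hmarkov : (#{n ∈ Icc 1 N | t ≤ a n} : ℝ) * t < N * t * t :=
    calc (#{n ∈ Icc 1 N | t ≤ a n} : ℝ) * t ≤ ∑ n ∈ Icc 1 N, a n :=
          card_filter_le_mul_le_sum _ (fun n _ => ha n) t
      _ < N * t * t := by
          rw [cesaroMean, div_lt_iff₀ hN] at hmean
          linarith
  rw [sub_lt_comm, one_sub_partialDensity hK, div_lt_iff₀ hN]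
  calc (#{n ∈ Icc 1 N | n ∉ thresholdSet a φ} : ℝ) ≤ #{n ∈ Icc 1 N | t ≤ a n} := by
        exact_mod_cast card_le_card hmissed
    _ < N * t := lt_of_mul_lt_mul_right hmarkov ht0.le
    _ = t * N := mul_comm _ _

theorem exists_upperDensity_eq_one_of_liminf_cesaroMean_eq_zero {C : ℝ} (ha : ∀ n, 0 ≤ a n)
    (hC : ∀ n, a n ≤ C) (h : liminf (cesaroMean a) atTop = 0) :
    ∃ S : Set ℕ, upperDensity S = 1 ∧ ∀ ε > 0, ∃ N : ℕ, ∀ n ∈ S, N ≤ n → a n < ε := by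
  have hfreq (k : ℕ) : ∃ᶠ N in atTop, N ≠ 0 ∧ cesaroMean a N < (1 / ((k : ℝ) + 1)) ^ 2 :=
    (((liminf_cesaroMean_eq_zero_iff ha hC).1 h _ (by positivity)).and_eventually
      (eventually_ne_atTop 0)).mono fun _ hN => hN.symm
  obtain ⟨φ, hφ, hφmean⟩ := extraction_forall_of_frequently hfreq
  refine ⟨thresholdSet a φ, upperDensity_eq_one_iff.2 fun y hy => ?_,
    fun ε hε => hφ.exists_lt_of_mem_thresholdSet hε⟩
  obtain ⟨K, hK⟩ := exists_nat_one_div_lt (sub_pos.2 hy)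
  refine hφ.tendsto_atTop.frequently ((eventually_ge_atTop K).mono fun k hk => ?_).frequently
  calc y < 1 - 1 / ((K : ℝ) + 1) := by linarith
    _ ≤ 1 - 1 / ((k : ℝ) + 1) := by gcongr
    _ < partialDensity (thresholdSet a φ) (φ k) :=
        one_sub_lt_partialDensity_thresholdSet ha (hφmean k).1 (hφmean k).2

end Forward

/-- For a bounded sequence of nonnegative reals, the averages have lower limit zero
iff the sequence tends to zero along a set of upper density one. -/
theorem stmt0 (a : ℕ → ℝ) (hnn : ∀ n, 0 ≤ a n) (hbd : ∃ C, ∀ n, a n ≤ C) :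
    Filter.liminf (fun N : ℕ => (∑ n ∈ Finset.Icc 1 N, a n) / N) Filter.atTop = 0 ↔
      ∃ S : Set ℕ, upperDensity S = 1 ∧
        ∀ ε > 0, ∃ N : ℕ, ∀ n ∈ S, N ≤ n → a n < ε := by
  obtain ⟨C, hC⟩ := hbd
  exact ⟨exists_upperDensity_eq_one_of_liminf_cesaroMean_eq_zero hnn hC,
    fun ⟨_, hS, hlim⟩ => liminf_cesaroMean_eq_zero_of_upperDensity_eq_one hnn hC hS hlim⟩
end

section
/- Let (X, d, T) be a topological dynamical system (X compact metric, T : X → X continuous). A pair (x, y) ∈ X × X satisfies: there exists a set S ⊆ ℕ of upper density 1 with d(T^n x, T^n y) → 0 along S, and there exist s > 0 and a set S' of positive upper density with d(T^n x, T^n y) ≥ s for all n ∈ S', if and only if liminf_{N→∞} (1/N) ∑_{n=1}^N d(T^n x, T^n y) = 0 and limsup_{N→∞} (1/N) ∑_{n=1}^N d(T^n x, T^n y) > 0. -/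
open Filter
open scoped Classical

/-!
Write `f n = d(Tⁿx, Tⁿy)`, a bounded nonnegative sequence, and `A N` for its Cesàro averages;
the density of `S` up to `N` is the Cesàro average of the indicator of `S`. Markov's inequality
`s · #{n ≤ N | s ≤ f n} ≤ N · A N` and the splitting `A N ≤ ε + M · #{n ≤ N | ε ≤ f n} / N`
turn density statements about level sets of `f` into statements about `A`: some `{f ≥ s}` has
positive upper density iff `limsup A > 0`, and `f → 0` along a set of upper density one iff
`liminf A = 0`. For the last implication pick `N₀ < N₁ < ⋯` with `A N_k < 1/(k+1)²` and let `S`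
be the set of `n` with `f n < 1/(k+1)` whenever `n > N_k`; by Markov at `N_k`, `S` misses fewer
than `N_k/(k+1)` points of `[1, N_k]`.
-/

open Finset

noncomputable def cesaroAvg (f : ℕ → ℝ) (N : ℕ) : ℝ := (∑ n ∈ Icc 1 N, f n) / N

section CesaroAvg

variable {f g : ℕ → ℝ} {M c : ℝ} {N : ℕ}

lemma cesaroAvg_le_cesaroAvg (h : ∀ n ∈ Icc 1 N, f n ≤ g n) :
    cesaroAvg f N ≤ cesaroAvg g N :=
  div_le_div_of_nonneg_right (sum_le_sum h) N.cast_nonneg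

lemma cesaroAvg_add (f g : ℕ → ℝ) (N : ℕ) :
    cesaroAvg (fun n => f n + g n) N = cesaroAvg f N + cesaroAvg g N := by
  simp only [cesaroAvg, sum_add_distrib, add_div]

lemma cesaroAvg_const_mul (c : ℝ) (f : ℕ → ℝ) (N : ℕ) :
    cesaroAvg (fun n => c * f n) N = c * cesaroAvg f N := by
  simp only [cesaroAvg, ← mul_sum, mul_div_assoc]

lemma cesaroAvg_const (c : ℝ) (hN : N ≠ 0) : cesaroAvg (fun _ => c) N = c := by
  simp [cesaroAvg, hN]

lemma cesaroAvg_const_add_le (hc : 0 ≤ c) (f : ℕ → ℝ) (N : ℕ) :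
    cesaroAvg (fun n => c + f n) N ≤ c + cesaroAvg f N := by
  rw [cesaroAvg_add]
  rcases eq_or_ne N 0 with rfl | hN
  · simpa [cesaroAvg] using hc
  · rw [cesaroAvg_const c hN]

lemma cesaroAvg_nonneg (hf : ∀ n, 0 ≤ f n) (N : ℕ) : 0 ≤ cesaroAvg f N :=
  div_nonneg (sum_nonneg fun n _ => hf n) N.cast_nonneg

lemma cesaroAvg_le (hf : ∀ n, f n ≤ M) (hM : 0 ≤ M) (N : ℕ) : cesaroAvg f N ≤ M := by
  rcases eq_or_ne N 0 with rfl | hN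
  · simpa [cesaroAvg] using hM
  · calc cesaroAvg f N ≤ cesaroAvg (fun _ => M) N := cesaroAvg_le_cesaroAvg fun n _ => hf n
      _ = M := cesaroAvg_const M hN

lemma isBoundedUnder_ge_cesaroAvg (hf : ∀ n, 0 ≤ f n) :
    IsBoundedUnder (· ≥ ·) atTop (cesaroAvg f) :=
  isBoundedUnder_of ⟨0, cesaroAvg_nonneg hf⟩

lemma isBoundedUnder_le_cesaroAvg (hf : ∀ n, f n ≤ M) (hM : 0 ≤ M) :
    IsBoundedUnder (· ≤ ·) atTop (cesaroAvg f) :=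
  isBoundedUnder_of ⟨M, cesaroAvg_le hf hM⟩

end CesaroAvg

lemma Set.indicator_one_nonneg {α : Type*} (s : Set α) (a : α) : 0 ≤ s.indicator (1 : α → ℝ) a :=
  Set.indicator_nonneg (fun _ _ => zero_le_one) a

lemma Set.indicator_one_le_one {α : Type*} (s : Set α) (a : α) : s.indicator (1 : α → ℝ) a ≤ 1 :=
  Set.indicator_le_self' (fun _ _ => zero_le_one) a

section Density

variable {N : ℕ}

lemma upperDensity_eq_limsup_cesaroAvg (S : Set ℕ) :
    upperDensity S = limsup (cesaroAvg (S.indicator 1)) atTop := by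
  unfold upperDensity cesaroAvg
  simp only [Set.indicator_apply, Pi.one_apply, sum_boole]

lemma cesaroAvg_indicator_add_compl (S : Set ℕ) (hN : N ≠ 0) :
    cesaroAvg (S.indicator 1) N + cesaroAvg (Sᶜ.indicator 1) N = 1 := by
  simp [← cesaroAvg_add, Set.indicator_self_add_compl_apply, cesaroAvg_const _ hN]

lemma cesaroAvg_indicator_Iio_le (m N : ℕ) :
    cesaroAvg ((Set.Iio m).indicator 1) N ≤ m / N := by
  refine div_le_div_of_nonneg_right ?_ N.cast_nonneg
  rw [sum_indicator_eq_sum_filter]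
  simp only [Pi.one_apply, sum_const, nsmul_eq_mul, mul_one, Nat.cast_le]
  exact_mod_cast (card_le_card fun n hn => by simp_all).trans (card_range m).le

lemma upperDensity_le_one (S : Set ℕ) : upperDensity S ≤ 1 := by
  rw [upperDensity_eq_limsup_cesaroAvg]
  exact limsup_le_of_le
    (isBoundedUnder_ge_cesaroAvg (Set.indicator_one_nonneg S)).isCoboundedUnder_le
    (Eventually.of_forall (cesaroAvg_le (Set.indicator_one_le_one S) zero_le_one))

lemma upperDensity_eq_one_of_frequently {S : Set ℕ}
    (h : ∀ δ > 0, ∃ᶠ N in atTop, 1 - δ < cesaroAvg (S.indicator 1) N) : upperDensity S = 1 := by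
  refine (upperDensity_le_one S).antisymm (le_of_forall_lt fun c hc => ?_)
  have hfreq := h ((1 - c) / 2) (by linarith)
  calc c < 1 - (1 - c) / 2 := by linarith
    _ ≤ upperDensity S := by
      rw [upperDensity_eq_limsup_cesaroAvg]
      exact le_limsup_of_frequently_le (hfreq.mono fun _ hN => hN.le)
        (isBoundedUnder_le_cesaroAvg (Set.indicator_one_le_one S) zero_le_one)

end Density

section Dichotomy

variable {f : ℕ → ℝ} {M : ℝ}

theorem limsup_cesaroAvg_pos_of_upperDensity_pos (hf0 : ∀ n, 0 ≤ f n) (hfM : ∀ n, f n ≤ M)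
    {s : ℝ} (hs : 0 < s) {S : Set ℕ} (hS : 0 < upperDensity S) (hsf : ∀ n ∈ S, s ≤ f n) :
    0 < limsup (cesaroAvg f) atTop := by
  have hmarkov : ∀ N, s * cesaroAvg (S.indicator 1) N ≤ cesaroAvg f N := fun N => by
    rw [← cesaroAvg_const_mul]
    refine cesaroAvg_le_cesaroAvg fun n _ => ?_
    by_cases hn : n ∈ S <;> simp [hn, hsf, hf0]
  have hfreq : ∃ᶠ N in atTop, upperDensity S / 2 < cesaroAvg (S.indicator 1) N := by
    refine frequently_lt_of_lt_limsup
      (isBoundedUnder_ge_cesaroAvg (Set.indicator_one_nonneg S)).isCoboundedUnder_le ?_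
    rw [← upperDensity_eq_limsup_cesaroAvg]
    linarith
  have hbound : s * (upperDensity S / 2) ≤ limsup (cesaroAvg f) atTop :=
    le_limsup_of_frequently_le
      (hfreq.mono fun N hN => (mul_le_mul_of_nonneg_left hN.le hs.le).trans (hmarkov N))
      (isBoundedUnder_le_cesaroAvg hfM ((hf0 0).trans (hfM 0)))
  exact (by positivity : 0 < s * (upperDensity S / 2)).trans_le hbound

theorem exists_upperDensity_setOf_le_pos (hf0 : ∀ n, 0 ≤ f n) (hfM : ∀ n, f n ≤ M)
    (h : 0 < limsup (cesaroAvg f) atTop) : ∃ s > 0, 0 < upperDensity {n | s ≤ f n} := by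
  set L := limsup (cesaroAvg f) atTop
  set A := {n | L / 2 ≤ f n}
  have hM : 0 ≤ M := (hf0 0).trans (hfM 0)
  have hMpos : 0 < M := h.trans_le <| limsup_le_of_le
    (isBoundedUnder_ge_cesaroAvg hf0).isCoboundedUnder_le
    (Eventually.of_forall (cesaroAvg_le hfM hM))
  have hsplit : ∀ N, cesaroAvg f N ≤ L / 2 + M * cesaroAvg (A.indicator 1) N := fun N => by
    rw [← cesaroAvg_const_mul]
    refine (cesaroAvg_le_cesaroAvg fun n _ => ?_).trans
      (cesaroAvg_const_add_le (by positivity) _ N)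
    by_cases hn : n ∈ A
    · simp only [Set.indicator_of_mem hn, Pi.one_apply, mul_one]
      linarith [hfM n]
    · simp only [Set.indicator_of_notMem hn, mul_zero, add_zero]
      exact (not_le.1 hn).le
  have hfreq : ∃ᶠ N in atTop, L / (4 * M) ≤ cesaroAvg (A.indicator 1) N := by
    refine (frequently_lt_of_lt_limsup (isBoundedUnder_ge_cesaroAvg hf0).isCoboundedUnder_le
      (by linarith : 3 * L / 4 < L)).mono fun N hN => ?_
    rw [div_le_iff₀ (by positivity)]
    linarith [hsplit N]
  refine ⟨L / 2, by positivity, (by positivity : 0 < L / (4 * M)).trans_le ?_⟩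
  rw [upperDensity_eq_limsup_cesaroAvg]
  exact le_limsup_of_frequently_le hfreq
    (isBoundedUnder_le_cesaroAvg (Set.indicator_one_le_one A) zero_le_one)

theorem liminf_cesaroAvg_eq_zero (hf0 : ∀ n, 0 ≤ f n) (hfM : ∀ n, f n ≤ M) {S : Set ℕ}
    (hS : upperDensity S = 1) (hSf : ∀ ε > (0 : ℝ), ∃ N₀ : ℕ, ∀ n ∈ S, N₀ ≤ n → f n < ε) :
    liminf (cesaroAvg f) atTop = 0 := by
  have hM : 0 ≤ M := (hf0 0).trans (hfM 0)
  refine le_antisymm (le_of_forall_pos_le_add fun ε hε => ?_) <| le_liminf_of_le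
    (isBoundedUnder_le_cesaroAvg hfM hM).isCoboundedUnder_ge
    (Eventually.of_forall (cesaroAvg_nonneg hf0))
  set η := ε / (1 + 2 * M)
  have hη : 0 < η := by positivity
  obtain ⟨N₀, hN₀⟩ := hSf η hη
  have hpoint : ∀ n, f n ≤ η + (M * Sᶜ.indicator 1 n + M * (Set.Iio N₀).indicator 1 n) := by
    intro n
    by_cases hnS : n ∈ S <;> by_cases hnN : n < N₀ <;> simp [hnS, hnN]
    · linarith [hfM n]
    · exact (hN₀ n hnS (not_lt.1 hnN)).le
    · linarith [hfM n]
    · linarith [hfM n]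
  have hsplit : ∀ N, cesaroAvg f N ≤
      η + (M * cesaroAvg (Sᶜ.indicator 1) N + M * cesaroAvg ((Set.Iio N₀).indicator 1) N) := by
    intro N
    rw [← cesaroAvg_const_mul, ← cesaroAvg_const_mul, ← cesaroAvg_add]
    exact (cesaroAvg_le_cesaroAvg fun n _ => hpoint n).trans (cesaroAvg_const_add_le hη.le _ N)
  have hfreq : ∃ᶠ N in atTop, 1 - η < cesaroAvg (S.indicator 1) N :=
    frequently_lt_of_lt_limsup
      (isBoundedUnder_ge_cesaroAvg (Set.indicator_one_nonneg S)).isCoboundedUnder_le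
      (by rw [← upperDensity_eq_limsup_cesaroAvg, hS]; linarith)
  have hev : ∀ᶠ N : ℕ in atTop, N ≠ 0 ∧ (N₀ : ℝ) / N ≤ η :=
    (eventually_ne_atTop 0).and
      ((tendsto_const_div_atTop_nhds_zero_nat (N₀ : ℝ)).eventually (ge_mem_nhds hη))
  rw [zero_add]
  refine liminf_le_of_frequently_le
    ((hfreq.and_eventually hev).mono fun N ⟨hdense, hN, hsmall⟩ => ?_)
    (isBoundedUnder_ge_cesaroAvg hf0)
  calc cesaroAvg f N
      ≤ η + (M * cesaroAvg (Sᶜ.indicator 1) N + M * cesaroAvg ((Set.Iio N₀).indicator 1) N) :=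
        hsplit N
    _ ≤ η + (M * η + M * η) := by
        gcongr
        · linarith [cesaroAvg_indicator_add_compl S hN]
        · exact (cesaroAvg_indicator_Iio_le N₀ N).trans hsmall
    _ = η * (1 + 2 * M) := by ring
    _ = ε := div_mul_cancel₀ _ (by positivity)

theorem exists_upperDensity_eq_one_of_liminf_cesaroAvg_eq_zero (hf0 : ∀ n, 0 ≤ f n)
    (hfM : ∀ n, f n ≤ M) (h : liminf (cesaroAvg f) atTop = 0) :
    ∃ S : Set ℕ, upperDensity S = 1 ∧ ∀ ε > (0 : ℝ), ∃ N₀ : ℕ, ∀ n ∈ S, N₀ ≤ n → f n < ε := by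
  have hM : 0 ≤ M := (hf0 0).trans (hfM 0)
  set ε : ℕ → ℝ := fun k => 1 / ((k : ℝ) + 1)
  have hε : ∀ k, 0 < ε k := fun k => Nat.one_div_pos_of_nat
  have hε_anti : Antitone ε := fun _ _ hjk => Nat.one_div_le_one_div hjk
  obtain ⟨φ, hφ, hφf⟩ : ∃ φ : ℕ → ℕ, StrictMono φ ∧ ∀ k, cesaroAvg f (φ k) < ε k ^ 2 :=
    extraction_forall_of_frequently fun k => frequently_lt_of_liminf_lt
      (isBoundedUnder_le_cesaroAvg hfM hM).isCoboundedUnder_ge (h ▸ pow_pos (hε k) 2)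
  set S : Set ℕ := {n | ∀ k, φ k < n → f n < ε k}
  have hSc : ∀ k, cesaroAvg (Sᶜ.indicator 1) (φ k) < ε k := fun k => by
    have hmarkov : ε k * cesaroAvg (Sᶜ.indicator 1) (φ k) ≤ cesaroAvg f (φ k) := by
      rw [← cesaroAvg_const_mul]
      refine cesaroAvg_le_cesaroAvg fun n hn => ?_
      by_cases hnS : n ∈ S
      · simp [hnS, hf0]
      · obtain ⟨j, hjn, hj⟩ : ∃ j, φ j < n ∧ ε j ≤ f n := by simpa [S] using hnS
        have hjk : j ≤ k := (hφ.lt_iff_lt.1 (hjn.trans_le (mem_Icc.1 hn).2)).le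
        simpa [hnS] using (hε_anti hjk).trans hj
    nlinarith [hφf k, hε k]
  refine ⟨S, upperDensity_eq_one_of_frequently fun δ hδ => ?_, fun δ hδ => ?_⟩
  · obtain ⟨K, hK⟩ := exists_nat_one_div_lt hδ
    refine hφ.tendsto_atTop.frequently (Eventually.frequently ?_)
    filter_upwards [eventually_ge_atTop (K + 1)] with k hk
    have hφk : φ k ≠ 0 := by have : k ≤ φ k := hφ.id_le k; omega
    linarith [cesaroAvg_indicator_add_compl S hφk, hSc k, hε_anti (show K ≤ k by omega)]
  · obtain ⟨K, hK⟩ := exists_nat_one_div_lt hδ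
    exact ⟨φ K + 1, fun n hn hKn => (hn K hKn).trans hK⟩

end Dichotomy

theorem stmt4_general {X : Type*} [MetricSpace X] [CompactSpace X] (T : X → X)
    (x y : X) :
    ((∃ S : Set ℕ, upperDensity S = 1 ∧
        ∀ ε > (0 : ℝ), ∃ N : ℕ, ∀ n ∈ S, N ≤ n → dist (T^[n] x) (T^[n] y) < ε) ∧
     (∃ s > (0 : ℝ), ∃ S' : Set ℕ, 0 < upperDensity S' ∧
        ∀ n ∈ S', s ≤ dist (T^[n] x) (T^[n] y))) ↔
    (Filter.liminf
        (fun N : ℕ => (∑ n ∈ Finset.Icc 1 N, dist (T^[n] x) (T^[n] y)) / N) Filter.atTop = 0 ∧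
     0 < Filter.limsup
        (fun N : ℕ => (∑ n ∈ Finset.Icc 1 N, dist (T^[n] x) (T^[n] y)) / N) Filter.atTop) := by
  set f : ℕ → ℝ := fun n => dist (T^[n] x) (T^[n] y)
  have hf0 : ∀ n, 0 ≤ f n := fun n => dist_nonneg
  have hfM : ∀ n, f n ≤ Metric.diam (Set.univ : Set X) := fun n =>
    Metric.dist_le_diam_of_mem isCompact_univ.isBounded trivial trivial
  change ((∃ S : Set ℕ, upperDensity S = 1 ∧ ∀ ε > (0 : ℝ), ∃ N : ℕ, ∀ n ∈ S, N ≤ n → f n < ε) ∧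
      ∃ s > (0 : ℝ), ∃ S' : Set ℕ, 0 < upperDensity S' ∧ ∀ n ∈ S', s ≤ f n) ↔
    liminf (cesaroAvg f) atTop = 0 ∧ 0 < limsup (cesaroAvg f) atTop
  constructor
  · rintro ⟨⟨S, hS, hSf⟩, s, hs, S', hS', hsf⟩
    exact ⟨liminf_cesaroAvg_eq_zero hf0 hfM hS hSf,
      limsup_cesaroAvg_pos_of_upperDensity_pos hf0 hfM hs hS' hsf⟩
  · rintro ⟨hinf, hsup⟩
    obtain ⟨s, hs, hS'⟩ := exists_upperDensity_setOf_le_pos hf0 hfM hsup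
    exact ⟨exists_upperDensity_eq_one_of_liminf_cesaroAvg_eq_zero hf0 hfM hinf,
      s, hs, _, hS', fun _ hn => hn⟩

/-- A pair is DC2-scrambled (distance tends to `0` along a set of upper density `1`, and is
bounded below by some `s > 0` on a set of positive upper density) iff the ergodic averages of
the distance along the two orbits have lower limit `0` and positive upper limit. -/
theorem stmt4 {X : Type*} [MetricSpace X] [CompactSpace X] (T : X → X) (hT : Continuous T)
    (x y : X) :
    ((∃ S : Set ℕ, upperDensity S = 1 ∧
        ∀ ε > (0 : ℝ), ∃ N : ℕ, ∀ n ∈ S, N ≤ n → dist (T^[n] x) (T^[n] y) < ε) ∧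
     (∃ s > (0 : ℝ), ∃ S' : Set ℕ, 0 < upperDensity S' ∧
        ∀ n ∈ S', s ≤ dist (T^[n] x) (T^[n] y))) ↔
    (Filter.liminf
        (fun N : ℕ => (∑ n ∈ Finset.Icc 1 N, dist (T^[n] x) (T^[n] y)) / N) Filter.atTop = 0 ∧
     0 < Filter.limsup
        (fun N : ℕ => (∑ n ∈ Finset.Icc 1 N, dist (T^[n] x) (T^[n] y)) / N) Filter.atTop) :=
  stmt4_general T x y
end

section
/- Let (X, 𝔅, μ, T) be a measure-preserving system with μ nonatomic, and let E ⊆ X be a set such that for every pair of distinct points x, y ∈ E, the set of times n for which (T^n x, T^n y) lies in a fixed measurable subset of X × X has upper density 1 while its complement in ℕ has positive upper density (so the visit times do not have a density). If every such pair of points is non-generic for the product system in this sense, then (μ × μ)(E × E) = 0 and hence any measurable such E satisfies μ(E) = 0. -/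
/-!
Let `B` be the set of points of `X × X` whose `T × T`-orbit visits `W` with upper frequency one.
`B` is forward invariant, so the maximal ergodic theorem applied to `1_B (1_W - (1 - δ))` gives
`(1 - δ) ν(B) ≤ ν(B ∩ W)` for every `δ > 0`: almost every point of `B` lies in `W`, and hence
almost no orbit that enters `B` ever leaves `W`. A scrambled pair enters `B` after one step but
leaves `W` later, so `E × E` is covered by this null set and the diagonal, which is null because
`μ` is nonatomic.
-/

open MeasureTheory Filter
open scoped Classical

open Function Set Topology

section MaximalErgodic

variable {α : Type*} {S : α → α} {f : α → ℝ}

/-- `max (0, S₁ f, …, S_N f)`, the `k = 0` term being `birkhoffSum S f 0 = 0`. -/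
noncomputable def maxBirkhoffSum (S : α → α) (f : α → ℝ) (N : ℕ) (q : α) : ℝ :=
  (Finset.range (N + 1)).sup' Finset.nonempty_range_add_one fun k => birkhoffSum S f k q

theorem birkhoffSum_le_maxBirkhoffSum {k N : ℕ} (hk : k ≤ N) (q : α) :
    birkhoffSum S f k q ≤ maxBirkhoffSum S f N q :=
  Finset.le_sup' (fun k => birkhoffSum S f k q) (Finset.mem_range_succ_iff.2 hk)

theorem maxBirkhoffSum_nonneg (N : ℕ) (q : α) : 0 ≤ maxBirkhoffSum S f N q := by
  simpa using birkhoffSum_le_maxBirkhoffSum (S := S) (f := f) (Nat.zero_le N) q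

theorem monotone_maxBirkhoffSum (q : α) : Monotone fun N => maxBirkhoffSum S f N q :=
  fun _ _ hMN => Finset.sup'_mono _ (Finset.range_subset_range.2 (Nat.succ_le_succ hMN)) _

theorem exists_birkhoffSum_eq_maxBirkhoffSum (N : ℕ) (q : α) :
    ∃ k ≤ N, birkhoffSum S f k q = maxBirkhoffSum S f N q := by
  obtain ⟨k, hk, hmax⟩ := Finset.exists_mem_eq_sup' Finset.nonempty_range_add_one
    fun k => birkhoffSum S f k q
  exact ⟨k, Finset.mem_range_succ_iff.1 hk, hmax.symm⟩

/-- Garsia's inequality, the pointwise core of the maximal ergodic theorem. -/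
theorem maxBirkhoffSum_le_add_maxBirkhoffSum {N : ℕ} {q : α} (h : 0 < maxBirkhoffSum S f N q) :
    maxBirkhoffSum S f N q ≤ f q + maxBirkhoffSum S f N (S q) := by
  obtain ⟨k, hkN, hk⟩ := exists_birkhoffSum_eq_maxBirkhoffSum (S := S) (f := f) N q
  cases k with
  | zero => simp_all
  | succ m =>
    rw [← hk, birkhoffSum_succ']
    gcongr
    exact birkhoffSum_le_maxBirkhoffSum (by omega) _

theorem maxBirkhoffSum_le_birkhoffSum_abs (N : ℕ) (q : α) :
    maxBirkhoffSum S f N q ≤ birkhoffSum S (fun x => |f x|) N q := by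
  refine Finset.sup'_le _ _ fun k hk => ?_
  calc birkhoffSum S f k q ≤ birkhoffSum S (fun x => |f x|) k q :=
        Finset.sum_le_sum fun i _ => le_abs_self _
    _ ≤ birkhoffSum S (fun x => |f x|) N q :=
        Finset.sum_le_sum_of_subset_of_nonneg
          (Finset.range_subset_range.2 (Finset.mem_range_succ_iff.1 hk))
          fun i _ _ => abs_nonneg _

variable [MeasurableSpace α] {ν : Measure α}

theorem measurable_birkhoffSum (hS : Measurable S) (hf : Measurable f) (N : ℕ) :
    Measurable (birkhoffSum S f N) :=
  Finset.measurable_sum _ fun i _ => hf.comp (hS.iterate i)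

theorem measurable_maxBirkhoffSum (hS : Measurable S) (hf : Measurable f) (N : ℕ) :
    Measurable (maxBirkhoffSum S f N) :=
  Finset.measurable_range_sup'' fun k _ => measurable_birkhoffSum hS hf k

theorem MeasureTheory.MeasurePreserving.integrable_birkhoffSum (hS : MeasurePreserving S ν ν)
    (hf : Integrable f ν) (N : ℕ) : Integrable (birkhoffSum S f N) ν := by
  have : birkhoffSum S f N = ∑ i ∈ Finset.range N, f ∘ S^[i] := by
    ext q; simp [birkhoffSum]
  rw [this]
  exact integrable_finsetSum' _ fun i _ => (hS.iterate i).integrable_comp_of_integrable hf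

theorem MeasureTheory.MeasurePreserving.integrable_maxBirkhoffSum (hS : MeasurePreserving S ν ν)
    (hf : Measurable f) (hfi : Integrable f ν) (N : ℕ) :
    Integrable (maxBirkhoffSum S f N) ν :=
  (hS.integrable_birkhoffSum hfi.abs N).mono'
    (measurable_maxBirkhoffSum hS.measurable hf N).aestronglyMeasurable
    (Eventually.of_forall fun q => by
      rw [Real.norm_of_nonneg (maxBirkhoffSum_nonneg N q)]
      exact maxBirkhoffSum_le_birkhoffSum_abs N q)

theorem MeasureTheory.MeasurePreserving.setIntegral_maxBirkhoffSum_pos_nonneg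
    (hS : MeasurePreserving S ν ν) (hf : Measurable f) (hfi : Integrable f ν) (N : ℕ) :
    0 ≤ ∫ q in {q | 0 < maxBirkhoffSum S f N q}, f q ∂ν := by
  set M := maxBirkhoffSum S f N
  set U := {q | 0 < M q}
  have hM : Measurable M := measurable_maxBirkhoffSum hS.measurable hf N
  have hMi : Integrable M ν := hS.integrable_maxBirkhoffSum hf hfi N
  have hMSi : Integrable (fun q => M (S q)) ν := hS.integrable_comp_of_integrable hMi
  have hU : MeasurableSet U := measurableSet_lt measurable_const hM
  have hMS : ∫ q, M (S q) ∂ν = ∫ q, M q ∂ν := by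
    conv_rhs => rw [← hS.map_eq]
    exact (integral_map hS.measurable.aemeasurable hM.aestronglyMeasurable).symm
  have hpos : ∀ q, 0 ≤ U.indicator f q - (M q - M (S q)) := by
    intro q
    by_cases hq : q ∈ U
    · rw [indicator_of_mem hq]
      linarith [maxBirkhoffSum_le_add_maxBirkhoffSum (S := S) (f := f) hq]
    · have hMq : M q = 0 := le_antisymm (not_lt.1 hq) (maxBirkhoffSum_nonneg N q)
      rw [indicator_of_notMem hq, hMq]
      linarith [maxBirkhoffSum_nonneg (S := S) (f := f) N (S q)]
  calc (0 : ℝ) ≤ ∫ q, U.indicator f q - (M q - M (S q)) ∂ν := integral_nonneg hpos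
    _ = ∫ q in U, f q ∂ν := by
      have hD : Integrable (fun q => M q - M (S q)) ν := hMi.sub hMSi
      rw [integral_sub (hfi.indicator hU) hD, integral_sub hMi hMSi, integral_indicator hU, hMS,
        sub_self, sub_zero]

theorem MeasureTheory.MeasurePreserving.setIntegral_exists_birkhoffSum_pos_nonneg
    (hS : MeasurePreserving S ν ν) (hf : Measurable f) (hfi : Integrable f ν) :
    0 ≤ ∫ q in {q | ∃ N, 0 < birkhoffSum S f N q}, f q ∂ν := by
  have hU : {q | ∃ N, 0 < birkhoffSum S f N q} = ⋃ N, {q | 0 < maxBirkhoffSum S f N q} := by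
    ext q
    simp only [mem_ofPred_eq, mem_iUnion]
    constructor
    · rintro ⟨N, hN⟩
      exact ⟨N, hN.trans_le (birkhoffSum_le_maxBirkhoffSum le_rfl q)⟩
    · rintro ⟨N, hN⟩
      obtain ⟨k, -, hk⟩ := exists_birkhoffSum_eq_maxBirkhoffSum (S := S) (f := f) N q
      exact ⟨k, hk ▸ hN⟩
  rw [hU]
  exact ge_of_tendsto' (tendsto_setIntegral_of_monotone
    (fun N => measurableSet_lt measurable_const (measurable_maxBirkhoffSum hS.measurable hf N))
    (fun _ _ hMN _ hq => hq.trans_le (monotone_maxBirkhoffSum _ hMN)) hfi.integrableOn)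
    (hS.setIntegral_maxBirkhoffSum_pos_nonneg hf hfi)

end MaximalErgodic

section UpperFrequency

variable {α : Type*} {S : α → α} {W : Set α}

def upperDensityOneSet (S : α → α) (W : Set α) : Set α :=
  {q | ∀ ε : ℝ, 0 < ε → ∃ᶠ N in atTop, (1 - ε) * N < birkhoffSum S (W.indicator 1) N q}

theorem mapsTo_upperDensityOneSet :
    MapsTo S (upperDensityOneSet S W) (upperDensityOneSet S W) := by
  intro q hq ε hε
  have hshift := hq (ε / 2) (half_pos hε)
  rw [← map_add_atTop_eq_nat 1, frequently_map] at hshift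
  refine (hshift.and_eventually (eventually_ge_atTop 1)).mono fun N ⟨hN, hN1⟩ => ?_
  rw [birkhoffSum_succ'] at hN
  have h1 : W.indicator (1 : α → ℝ) q ≤ 1 := indicator_le_self' (fun _ _ => zero_le_one) _
  have hN1' : (1 : ℝ) ≤ N := by exact_mod_cast hN1
  push_cast at hN
  nlinarith

theorem birkhoffSum_indicator_of_mapsTo {s : Set α} (h : MapsTo S s s) {q : α} (hq : q ∈ s)
    (g : α → ℝ) (N : ℕ) : birkhoffSum S (s.indicator g) N q = birkhoffSum S g N q :=
  Finset.sum_congr rfl fun i _ => indicator_of_mem (h.iterate i hq) g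

variable [MeasurableSpace α] {ν : Measure α}

theorem measurableSet_upperDensityOneSet (hS : Measurable S) (hW : MeasurableSet W) :
    MeasurableSet (upperDensityOneSet S W) := by
  have hfreq : ∀ ε : ℝ, MeasurableSet
      {q | ∃ᶠ N in atTop, (1 - ε) * N < birkhoffSum S (W.indicator 1) N q} := fun ε => by
    have : {q | ∃ᶠ N in atTop, (1 - ε) * N < birkhoffSum S (W.indicator 1) N q} =
        limsup (fun N : ℕ => {q | (1 - ε) * N < birkhoffSum S (W.indicator 1) N q}) atTop := by
      ext q
      exact (mem_limsup_iff_frequently_mem (s := fun N : ℕ =>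
        {q | (1 - ε) * N < birkhoffSum S (W.indicator 1) N q})).symm
    rw [this]
    exact .measurableSet_limsup fun N => measurableSet_lt measurable_const
      (measurable_birkhoffSum hS (measurable_one.indicator hW) N)
  have hcountable : upperDensityOneSet S W = ⋂ k : ℕ,
      {q | ∃ᶠ N in atTop, (1 - 1 / (k + 1 : ℝ)) * N < birkhoffSum S (W.indicator 1) N q} := by
    ext q
    simp only [upperDensityOneSet, mem_ofPred_eq, mem_iInter]
    refine ⟨fun h k => h _ Nat.one_div_pos_of_nat, fun h ε hε => ?_⟩
    obtain ⟨k, hk⟩ := exists_nat_one_div_lt hε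
    exact (h k).mono fun N hN => lt_of_le_of_lt (by gcongr) hN
  rw [hcountable]
  exact MeasurableSet.iInter fun k => hfreq _

theorem MeasureTheory.MeasurePreserving.one_sub_mul_measureReal_le
    (hS : MeasurePreserving S ν ν) [IsFiniteMeasure ν] (hW : MeasurableSet W) {δ : ℝ}
    (hδ : 0 < δ) :
    (1 - δ) * ν.real (upperDensityOneSet S W) ≤ ν.real (upperDensityOneSet S W ∩ W) := by
  set B := upperDensityOneSet S W
  have hB : MeasurableSet B := measurableSet_upperDensityOneSet hS.measurable hW
  set g : α → ℝ := W.indicator 1 - fun _ => 1 - δ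
  have hWi : Integrable (W.indicator 1) ν := (integrable_const (1 : ℝ)).indicator hW
  have hgi : Integrable g ν := hWi.sub (integrable_const _)
  have hB_sub : B ⊆ {q | ∃ N, 0 < birkhoffSum S (B.indicator g) N q} := fun q hq => by
    obtain ⟨N, hN⟩ := (hq δ hδ).exists
    refine ⟨N, ?_⟩
    rw [birkhoffSum_indicator_of_mapsTo mapsTo_upperDensityOneSet hq, birkhoffSum_sub]
    simp only [birkhoffSum, Finset.sum_const, Finset.card_range, nsmul_eq_mul] at hN ⊢
    linarith
  have hmax := hS.setIntegral_exists_birkhoffSum_pos_nonneg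
    (((measurable_one.indicator hW).sub measurable_const).indicator hB) (hgi.indicator hB)
  have hg : ∫ q in B, g q ∂ν = ν.real (B ∩ W) - (1 - δ) * ν.real B := by
    simp only [g, Pi.sub_apply]
    rw [integral_sub (μ := ν.restrict B) hWi.integrableOn
      (integrable_const _).integrableOn, setIntegral_indicator hW, setIntegral_const]
    simp [mul_comm]
  rw [setIntegral_indicator hB, inter_eq_self_of_subset_right hB_sub, hg] at hmax
  linarith

theorem MeasureTheory.MeasurePreserving.measure_upperDensityOneSet_sdiff_eq_zero
    (hS : MeasurePreserving S ν ν) [IsFiniteMeasure ν] (hW : MeasurableSet W) :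
    ν (upperDensityOneSet S W \ W) = 0 := by
  set B := upperDensityOneSet S W
  have hlim :
      Tendsto (fun n : ℕ => (1 - 1 / ((n : ℝ) + 1)) * ν.real B) atTop (𝓝 (ν.real B)) := by
    simpa using ((tendsto_const_nhds (x := (1 : ℝ))).sub
      tendsto_one_div_add_atTop_nhds_zero_nat).mul_const (ν.real B)
  have hle : ν.real B ≤ ν.real (B ∩ W) :=
    le_of_tendsto' hlim fun n => hS.one_sub_mul_measureReal_le hW Nat.one_div_pos_of_nat
  rw [← measureReal_eq_zero_iff]
  linarith [measureReal_inter_add_sdiff (μ := ν) (s := B) hW,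
    measureReal_nonneg (μ := ν) (s := B \ W)]

end UpperFrequency

theorem exists_pos_mem_of_upperDensity_pos {s : Set ℕ} (h : 0 < upperDensity s) :
    ∃ n ∈ s, 0 < n := by
  by_contra! hs
  have hempty : ∀ N : ℕ, (Finset.Icc 1 N).filter (fun n => n ∈ s) = ∅ := fun N =>
    Finset.filter_eq_empty_iff.2 fun n hn hns => by
      have := hs n hns
      simp only [Finset.mem_Icc] at hn
      omega
  simp [upperDensity, hempty] at h

theorem frequently_lt_card_of_lt_upperDensity {s : Set ℕ} {c : ℝ} (h : c < upperDensity s) :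
    ∃ᶠ N in atTop, c * N < ((Finset.Icc 1 N).filter (fun n => n ∈ s)).card := by
  have hfreq := frequently_lt_of_lt_limsup
    (isBoundedUnder_of ⟨0, fun N => by positivity⟩).isCoboundedUnder_le h
  refine (hfreq.and_eventually (eventually_gt_atTop 0)).mono fun N ⟨hN, hN0⟩ => ?_
  rwa [lt_div_iff₀ (by exact_mod_cast hN0)] at hN

section Orbit

variable {α : Type*} {S : α → α} {W : Set α}

theorem card_filter_iterate_mem_eq_birkhoffSum (S : α → α) (W : Set α) (p : α) (N : ℕ) :
    (((Finset.Icc 1 N).filter (fun n => n ∈ {n | S^[n] p ∈ W})).card : ℝ) =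
      birkhoffSum S (W.indicator 1) N (S p) := by
  rw [Finset.card_filter, ← Finset.Ico_add_one_right_eq_Icc, Finset.sum_Ico_eq_sum_range]
  push_cast
  refine Finset.sum_congr rfl fun i _ => ?_
  simp [indicator_apply, add_comm 1 i, iterate_succ_apply]

theorem exists_iterate_mem_upperDensityOneSet_sdiff {p : α}
    (h₁ : upperDensity {n | S^[n] p ∈ W} = 1) (h₀ : 0 < upperDensity {n | S^[n] p ∉ W}) :
    ∃ n, S^[n] p ∈ upperDensityOneSet S W \ W := by
  have hSp : S p ∈ upperDensityOneSet S W := fun ε hε =>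
    (frequently_lt_card_of_lt_upperDensity (by rw [h₁]; exact sub_lt_self 1 hε)).mono
      fun N hN => by rwa [card_filter_iterate_mem_eq_birkhoffSum] at hN
  obtain ⟨n, hn, hn0⟩ := exists_pos_mem_of_upperDensity_pos h₀
  obtain ⟨m, rfl⟩ := Nat.exists_eq_add_one_of_ne_zero hn0.ne'
  refine ⟨m + 1, ?_, hn⟩
  rw [iterate_succ_apply]
  exact mapsTo_upperDensityOneSet.iterate m hSp

end Orbit

theorem MeasureTheory.Measure.prod_self_diagonal_eq_zero {α : Type*} [MeasurableSpace α]
    [MeasurableEq α] (μ : Measure α) [SFinite μ] [NullSingletonClass μ] :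
    μ.prod μ (diagonal α) = 0 := by
  have hslice : ∀ x : α, Prod.mk x ⁻¹' diagonal α = {x} := fun x => by ext y; simp [eq_comm]
  simp [Measure.prod_apply measurableSet_diagonal, hslice]

/-- If `μ` is nonatomic and every pair of distinct points of `E` visits a fixed measurable set
`W ⊆ X × X` with upper density one while the complementary visit times have positive upper
density (so the visit times have no density), then `(μ × μ)(E × E) = 0`, and hence any
measurable such `E` is null. -/
theorem stmt8 {X : Type*} [MeasurableSpace X] [StandardBorelSpace X]
    (μ : Measure X) [IsProbabilityMeasure μ] [NullSingletonClass μ]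
    (T : X → X) (hT : MeasurePreserving T μ μ)
    (W : Set (X × X)) (hW : MeasurableSet W) (E : Set X)
    (hscr : ∀ x ∈ E, ∀ y ∈ E, x ≠ y →
      upperDensity {n : ℕ | (T^[n] x, T^[n] y) ∈ W} = 1 ∧
      0 < upperDensity {n : ℕ | (T^[n] x, T^[n] y) ∉ W}) :
    (μ.prod μ) (E ×ˢ E) = 0 ∧ (MeasurableSet E → μ E = 0) := by
  set S := Prod.map T T
  have hS : MeasurePreserving S (μ.prod μ) (μ.prod μ) := hT.prod hT
  have hnull : μ.prod μ (⋃ n, S^[n] ⁻¹' (upperDensityOneSet S W \ W)) = 0 :=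
    measure_iUnion_null fun n => (hS.iterate n).quasiMeasurePreserving.preimage_null
      (hS.measure_upperDensityOneSet_sdiff_eq_zero hW)
  have hsub : E ×ˢ E ⊆ diagonal X ∪ ⋃ n, S^[n] ⁻¹' (upperDensityOneSet S W \ W) := by
    rintro ⟨x, y⟩ ⟨hx, hy⟩
    by_cases hxy : x = y
    · exact Or.inl hxy
    obtain ⟨h₁, h₀⟩ := hscr x hx y hy hxy
    refine Or.inr (mem_iUnion.2 (exists_iterate_mem_upperDensityOneSet_sdiff ?_ ?_)) <;>
      simpa only [S, Prod.map_iterate, Prod.map_apply]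
  have hEE : μ.prod μ (E ×ˢ E) = 0 :=
    measure_mono_null hsub (measure_union_null (μ.prod_self_diagonal_eq_zero) hnull)
  refine ⟨hEE, fun hE => ?_⟩
  rw [Measure.prod_prod] at hEE
  exact mul_self_eq_zero.mp hEE
end

section
/- Let x, y ∈ X and suppose {n : T^n x and T^n y lie in the same atom of 𝒫} has upper density 1, where 𝒫 is a finite partition of X. Let 𝒫' be another finite partition and B a measurable set with μ(B) ≤ δ such that 𝒫 restricted to X \ B refines 𝒫'. If both x and y are generic for B, i.e., the visit times of each of T^n x and T^n y to B have density μ(B), then the set {n : T^n x and T^n y lie in the same atom of 𝒫'} has upper density at least 1 − 2δ. -/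
open MeasureTheory Filter
open scoped Classical

/-! Off `B`, agreement in `P` forces agreement in `P'`, so the times of `P`-agreement are covered
by the times of `P'`-agreement together with the visits of `x` and of `y` to `B`. Upper density
is monotone and subadditive, and by genericity each family of visits has density `μ B ≤ δ`. -/

noncomputable def countingRatio (S : Set ℕ) (N : ℕ) : ℝ :=
  (((Finset.Icc 1 N).filter (fun n => n ∈ S)).card : ℝ) / N

lemma countingRatio_nonneg (S : Set ℕ) (N : ℕ) : 0 ≤ countingRatio S N := by
  unfold countingRatio; positivity

lemma countingRatio_le_one (S : Set ℕ) (N : ℕ) : countingRatio S N ≤ 1 := by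
  unfold countingRatio
  refine div_le_one_of_le₀ ?_ (Nat.cast_nonneg N)
  calc (((Finset.Icc 1 N).filter (· ∈ S)).card : ℝ) ≤ (Finset.Icc 1 N).card := by
        exact_mod_cast Finset.card_filter_le _ _
    _ = N := by simp

lemma countingRatio_mono {S S' : Set ℕ} (h : S ⊆ S') (N : ℕ) :
    countingRatio S N ≤ countingRatio S' N := by
  unfold countingRatio
  gcongr

lemma countingRatio_union_le (S S' : Set ℕ) (N : ℕ) :
    countingRatio (S ∪ S') N ≤ countingRatio S N + countingRatio S' N := by
  unfold countingRatio
  rw [← add_div]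
  gcongr
  norm_cast
  refine (Finset.card_le_card fun n => ?_).trans (Finset.card_union_le _ _)
  simp only [Finset.mem_filter, Finset.mem_union, Set.mem_union]
  tauto

lemma countingRatio_isBoundedUnder_le (S : Set ℕ) :
    IsBoundedUnder (· ≤ ·) atTop (countingRatio S) :=
  isBoundedUnder_of ⟨1, countingRatio_le_one S⟩

lemma countingRatio_isBoundedUnder_ge (S : Set ℕ) :
    IsBoundedUnder (· ≥ ·) atTop (countingRatio S) :=
  isBoundedUnder_of ⟨0, countingRatio_nonneg S⟩

lemma upperDensity_mono {S S' : Set ℕ} (h : S ⊆ S') : upperDensity S ≤ upperDensity S' :=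
  limsup_le_limsup (.of_forall (countingRatio_mono h))
    (countingRatio_isBoundedUnder_ge S).isCoboundedUnder_le (countingRatio_isBoundedUnder_le S')

lemma upperDensity_union_le (S S' : Set ℕ) :
    upperDensity (S ∪ S') ≤ upperDensity S + upperDensity S' :=
  calc upperDensity (S ∪ S')
      ≤ limsup (countingRatio S + countingRatio S') atTop :=
        limsup_le_limsup (.of_forall (countingRatio_union_le S S'))
          (countingRatio_isBoundedUnder_ge _).isCoboundedUnder_le
          (isBoundedUnder_of ⟨2, fun N => by
            simp only [Pi.add_apply]
            linarith [countingRatio_le_one S N, countingRatio_le_one S' N]⟩)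
    _ ≤ upperDensity S + upperDensity S' :=
        limsup_add_le (countingRatio_isBoundedUnder_ge S) (countingRatio_isBoundedUnder_le S)
          (countingRatio_isBoundedUnder_ge S').isCoboundedUnder_le
          (countingRatio_isBoundedUnder_le S')

lemma upperDensity_eq_of_tendsto {S : Set ℕ} {a : ℝ}
    (h : Tendsto (countingRatio S) atTop (nhds a)) : upperDensity S = a :=
  h.limsup_eq

theorem stmt11_general {X ι ι' : Type*} [MeasurableSpace X]
    (μ : Measure X) (T : X → X)
    (P : X → ι) (P' : X → ι') (B : Set X)
    (δ : ℝ) (hμB : (μ B).toReal ≤ δ)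
    (hrefine : ∀ z w : X, z ∉ B → w ∉ B → P z = P w → P' z = P' w)
    (x y : X)
    (hud : upperDensity {n : ℕ | P (T^[n] x) = P (T^[n] y)} = 1)
    (hgx : Tendsto
      (fun N : ℕ => (((Finset.Icc 1 N).filter (fun n => T^[n] x ∈ B)).card : ℝ) / N)
      atTop (nhds (μ B).toReal))
    (hgy : Tendsto
      (fun N : ℕ => (((Finset.Icc 1 N).filter (fun n => T^[n] y ∈ B)).card : ℝ) / N)
      atTop (nhds (μ B).toReal)) :
    1 - 2 * δ ≤ upperDensity {n : ℕ | P' (T^[n] x) = P' (T^[n] y)} := by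
  set visitsX := {n : ℕ | T^[n] x ∈ B}
  set visitsY := {n : ℕ | T^[n] y ∈ B}
  have hcover : {n : ℕ | P (T^[n] x) = P (T^[n] y)} ⊆
      {n : ℕ | P' (T^[n] x) = P' (T^[n] y)} ∪ (visitsX ∪ visitsY) := by
    intro n hn
    by_cases hx : T^[n] x ∈ B
    · exact .inr (.inl hx)
    by_cases hy : T^[n] y ∈ B
    · exact .inr (.inr hy)
    exact .inl (hrefine _ _ hx hy hn)
  have hX : upperDensity visitsX = (μ B).toReal := upperDensity_eq_of_tendsto hgx
  have hY : upperDensity visitsY = (μ B).toReal := upperDensity_eq_of_tendsto hgy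
  calc 1 - 2 * δ
      ≤ upperDensity {n : ℕ | P (T^[n] x) = P (T^[n] y)} - 2 * (μ B).toReal := by
        rw [hud]; linarith
    _ ≤ upperDensity {n : ℕ | P' (T^[n] x) = P' (T^[n] y)}
          + (upperDensity visitsX + upperDensity visitsY) - 2 * (μ B).toReal := by
        gcongr
        exact (upperDensity_mono hcover).trans <| (upperDensity_union_le _ _).trans <|
          add_le_add_right (upperDensity_union_le _ _) _
    _ = upperDensity {n : ℕ | P' (T^[n] x) = P' (T^[n] y)} := by
        rw [hX, hY]; ring

/-- If the orbits of `x` and `y` fall in the same atom of the finite partition `P` with upper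
density one, `P` refines the finite partition `P'` off a set `B` of measure at most `δ`, and
both `x` and `y` are generic for `B`, then the orbits fall in the same atom of `P'` with upper
density at least `1 - 2δ`. (Partitions are encoded as maps to finite index sets; atoms are
fibers.) -/
theorem stmt11 {X ι ι' : Type*} [Fintype ι] [Fintype ι'] [MeasurableSpace X]
    (μ : Measure X) [IsProbabilityMeasure μ] (T : X → X) (hT : MeasurePreserving T μ μ)
    (P : X → ι) (P' : X → ι') (B : Set X) (hB : MeasurableSet B)
    (δ : ℝ) (hμB : (μ B).toReal ≤ δ)
    (hrefine : ∀ z w : X, z ∉ B → w ∉ B → P z = P w → P' z = P' w)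
    (x y : X)
    (hud : upperDensity {n : ℕ | P (T^[n] x) = P (T^[n] y)} = 1)
    (hgx : Tendsto
      (fun N : ℕ => (((Finset.Icc 1 N).filter (fun n => T^[n] x ∈ B)).card : ℝ) / N)
      atTop (nhds (μ B).toReal))
    (hgy : Tendsto
      (fun N : ℕ => (((Finset.Icc 1 N).filter (fun n => T^[n] y ∈ B)).card : ℝ) / N)
      atTop (nhds (μ B).toReal)) :
    1 - 2 * δ ≤ upperDensity {n : ℕ | P' (T^[n] x) = P' (T^[n] y)} :=
  stmt11_general μ T P P' B δ hμB hrefine x y hud hgx hgy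
end

section
/- Let μ be ergodic and let P be a property of subsets of X such that (i) the image under T of any uncountable P-set is an uncountable P-set, (ii) any uncountable subset of a P-set is a P-set, and (iii) for every set A of μ-measure zero there is an uncountable P-set E ⊆ X \ A. Then every B ∈ 𝔅 with μ(B) > 0 contains an uncountable P-set. -/
open MeasureTheory

/-- For an ergodic system and a hereditary property `P` of subsets of `X` (preserved under
the image by `T` and under passing to uncountable subsets), if an uncountable `P`-set can be
found avoiding any prescribed null set, then every measurable set of positive measure
contains an uncountable `P`-set. -/
theorem stmt15 {X : Type*} [MeasurableSpace X]
    (μ : Measure X) [IsProbabilityMeasure μ] (T : X → X) (hT : Ergodic T μ)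
    (P : Set X → Prop)
    (h1 : ∀ E : Set X, ¬E.Countable → P E → ¬(T '' E).Countable ∧ P (T '' E))
    (h2 : ∀ E E' : Set X, E' ⊆ E → P E → ¬E'.Countable → P E')
    (h3 : ∀ A : Set X, μ A = 0 → ∃ E : Set X, ¬E.Countable ∧ P E ∧ Disjoint E A) :
    ∀ B : Set X, MeasurableSet B → 0 < μ B → ∃ E ⊆ B, ¬E.Countable ∧ P E := by
  intro B hB hμB
  have hTm : Measurable T := hT.toMeasurePreserving.measurable
  set C : Set X := ⋃ n : ℕ, (T^[n]) ⁻¹' B with hC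
  have hCm : MeasurableSet C := MeasurableSet.iUnion fun n => (hTm.iterate n) hB
  have hpre : T ⁻¹' C ⊆ C := by
    intro x hx
    simp only [hC, Set.mem_iUnion, Set.mem_preimage] at hx ⊢
    obtain ⟨n, hn⟩ := hx
    exact ⟨n + 1, by rwa [Function.iterate_succ_apply]⟩
  have hae : C =ᵐ[μ] (∅ : Set X) ∨ C =ᵐ[μ] Set.univ :=
    hT.ae_empty_or_univ_of_preimage_ae_le hCm.nullMeasurableSet hpre.eventuallyLE
  have hCfull : μ Cᶜ = 0 := by
    rcases hae with h | h
    · exfalso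
      have : μ C = 0 := by simpa using h.measure_eq
      have hBC : B ⊆ C := by
        intro x hx
        exact Set.mem_iUnion.2 ⟨0, by simpa using hx⟩
      exact absurd (measure_mono_null hBC this) (by
        exact fun h0 => lt_irrefl 0 (h0 ▸ hμB))
    · have : μ C = 1 := by
        rw [h.measure_eq]; simp
      rw [measure_compl hCm (measure_ne_top μ C), this]
      simp
  obtain ⟨E, hEunc, hEP, hEdisj⟩ := h3 Cᶜ hCfull
  have hEC : E ⊆ C := by
    intro x hx
    by_contra hxc
    exact (hEdisj.ne_of_mem hx hxc) rfl
  -- some piece E ∩ (T^[n])⁻¹' B is uncountable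
  have : ¬ ∀ n : ℕ, (E ∩ (T^[n]) ⁻¹' B).Countable := by
    intro hall
    apply hEunc
    have : E ⊆ ⋃ n : ℕ, E ∩ (T^[n]) ⁻¹' B := by
      intro x hx
      obtain ⟨s, ⟨n, rfl⟩, hxs⟩ := hEC hx
      exact Set.mem_iUnion.2 ⟨n, hx, hxs⟩
    exact (Set.countable_iUnion hall).mono this
  push_neg at this
  obtain ⟨n, hn⟩ := this
  set E' : Set X := E ∩ (T^[n]) ⁻¹' B with hE'
  have hE'P : P E' := h2 E E' Set.inter_subset_left hEP hn
  -- iterate image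
  have key : ∀ m : ℕ, ∀ F : Set X, ¬F.Countable → P F →
      ¬(T^[m] '' F).Countable ∧ P (T^[m] '' F) := by
    intro m
    induction m with
    | zero => intro F hF hPF; simpa using ⟨hF, hPF⟩
    | succ k ih =>
      intro F hF hPF
      obtain ⟨h1', h2'⟩ := ih F hF hPF
      obtain ⟨h1'', h2''⟩ := h1 _ h1' h2'
      rw [Function.iterate_succ', Set.image_comp]
      exact ⟨h1'', h2''⟩
  obtain ⟨hI1, hI2⟩ := key n E' hn hE'P
  refine ⟨T^[n] '' E', ?_, hI1, hI2⟩
  rintro _ ⟨x, ⟨-, hx⟩, rfl⟩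
  exact hx
end
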